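/- arXiv:1601.06263 — 2 statements merged into one kernel-verified Lean document; each statement's English description precedes it below -/
import Mathlib

section
/- If a sequence {zᵏ} in AC₀²(Q,ℝⁿ) converges weakly to z⁰, i.e. the mixed derivatives z_{xy}ᵏ converge weakly in L²(Q,ℝⁿ) to z⁰_{xy}, then zᵏ converges uniformly to z⁰ on Q. -/
/-!
Write `z(p)` as the integral of `z_{xy}` over the rectangle `(0, p.1] × (0, p.2]`. Testing the
weak convergence against indicators of such rectangles gives pointwise convergence `zᵏ(p) → z⁰(p)`
(in `ℝⁿ` weak and strong convergence agree). A weakly convergent sequence is bounded by the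
uniform boundedness principle, and by Cauchy–Schwarz
`‖z(p) - z(q)‖ ≤ ‖z_{xy}‖_{L²} · |R_p ∆ R_q|^{1/2} ≤ ‖z_{xy}‖_{L²} · √(2 |p - q|)`,
so `{zᵏ}` is equicontinuous on the compact square, which upgrades pointwise convergence to
uniform convergence.
-/

open MeasureTheory Set Real

/-- The unit square `Q = [0,1] × [0,1]`. -/
def Q : Set (ℝ × ℝ) := Icc (0:ℝ) 1 ×ˢ Icc (0:ℝ) 1

open Filter Topology
open scoped symmDiff Interval

theorem tendstoUniformlyOn_of_equicontinuousOn_of_tendsto {ι X α : Type*} [TopologicalSpace X]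
    [UniformSpace α] {F : ι → X → α} {f : X → α} {ℱ : Filter ι} {K : Set X}
    (hK : IsCompact K) (hF : EquicontinuousOn F K)
    (h : ∀ x ∈ K, Tendsto (F · x) ℱ (𝓝 (f x))) :
    TendstoUniformlyOn F f ℱ K := by
  have := (EquicontinuousOn.tendsto_uniformOnFun_iff_pi' (𝔖 := {K}) (by simpa) (by simpa) ℱ f).mpr
    (tendsto_pi_nhds.mpr fun x => h x (by simpa using x.2))
  exact UniformOnFun.tendsto_iff_tendstoUniformlyOn.mp this K rfl

theorem Metric.equicontinuousOn_of_continuity_modulus {ι X α : Type*} [PseudoMetricSpace X]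
    [PseudoMetricSpace α] {S : Set X} (b : ℝ → ℝ) (b_lim : Tendsto b (𝓝 0) (𝓝 0))
    (F : ι → X → α) (H : ∀ x ∈ S, ∀ y ∈ S, ∀ i, dist (F i x) (F i y) ≤ b (dist x y)) :
    EquicontinuousOn F S :=
  (equicontinuous_restrict_iff F).mp <|
    Metric.equicontinuous_of_continuity_modulus b b_lim _ fun x y i => H x x.2 y y.2 i

theorem tendsto_of_forall_inner_tendsto {𝕜 E ι : Type*} [RCLike 𝕜] [NormedAddCommGroup E]
    [InnerProductSpace 𝕜 E] [FiniteDimensional 𝕜 E] {x : ι → E} {y : E} {l : Filter ι}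
    (h : ∀ v, Tendsto (fun i => inner 𝕜 v (x i)) l (𝓝 (inner 𝕜 v y))) :
    Tendsto x l (𝓝 y) := by
  set b := stdOrthonormalBasis 𝕜 E
  rw [← b.sum_repr' y, funext fun i => (b.sum_repr' (x i)).symm]
  exact tendsto_finsetSum _ fun j _ => (h (b j)).smul_const (b j)

theorem exists_norm_le_of_forall_inner_tendsto {𝕜 E : Type*} [RCLike 𝕜] [NormedAddCommGroup E]
    [InnerProductSpace 𝕜 E] [CompleteSpace E] {x : ℕ → E}
    (h : ∀ v, ∃ a, Tendsto (fun k => inner 𝕜 (x k) v) atTop (𝓝 a)) :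
    ∃ C, ∀ k, ‖x k‖ ≤ C := by
  have hbdd : ∀ v, ∃ C, ∀ k, ‖innerSL 𝕜 (x k) v‖ ≤ C := fun v => by
    obtain ⟨a, ha⟩ := h v
    obtain ⟨C, hC⟩ := ha.norm.bddAbove_range
    exact ⟨C, fun k => hC ⟨k, rfl⟩⟩
  simpa only [innerSL_apply_norm] using banach_steinhaus hbdd

section L2Estimates

variable {α E : Type*} [MeasurableSpace α] {μ : Measure α} [NormedAddCommGroup E]

theorem norm_setIntegral_sub_setIntegral_le [NormedSpace ℝ E] {f : α → E} {A B : Set α}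
    (hA : MeasurableSet A) (hB : MeasurableSet B)
    (hfA : IntegrableOn f A μ) (hfB : IntegrableOn f B μ) :
    ‖∫ x in A, f x ∂μ - ∫ x in B, f x ∂μ‖ ≤ ∫ x in A ∆ B, ‖f x‖ ∂μ := by
  have hpt : ∀ x, ‖A.indicator f x - B.indicator f x‖ = (A ∆ B).indicator (‖f ·‖) x := by
    intro x
    by_cases hxA : x ∈ A <;> by_cases hxB : x ∈ B <;> simp [hxA, hxB, mem_symmDiff]
  rw [← integral_indicator hA, ← integral_indicator hB,
    ← integral_sub ((integrable_indicator_iff hA).mpr hfA) ((integrable_indicator_iff hB).mpr hfB),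
    ← integral_indicator (hA.symmDiff hB), ← funext hpt]
  exact norm_integral_le_integral_norm _

theorem setIntegral_norm_le_eLpNorm_mul_sqrt {f : α → E} (hf : MemLp f 2 μ) {S : Set α}
    (hS : μ S ≠ ⊤) :
    ∫ x in S, ‖f x‖ ∂μ ≤ (eLpNorm f 2 μ).toReal * √(μ S).toReal := by
  have hL1 : eLpNorm f 1 (μ.restrict S) ≤ eLpNorm f 2 μ * μ S ^ (1 / 2 : ℝ) := by
    calc eLpNorm f 1 (μ.restrict S)
        ≤ eLpNorm f 2 (μ.restrict S) * μ.restrict S univ ^ (1 / 1 - 1 / 2 : ℝ) := by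
          simpa using eLpNorm_le_eLpNorm_mul_rpow_measure_univ one_le_two hf.1.restrict
      _ ≤ eLpNorm f 2 μ * μ S ^ (1 / 2 : ℝ) := by
          rw [Measure.restrict_apply_univ]
          norm_num
          gcongr
          exact Measure.restrict_le_self
  rw [integral_norm_eq_lintegral_enorm hf.1.restrict, ← eLpNorm_one_eq_lintegral_enorm,
    Real.sqrt_eq_rpow, ENNReal.toReal_rpow, ← ENNReal.toReal_mul]
  exact ENNReal.toReal_mono (by finiteness [hf.2.ne]) hL1

theorem norm_setIntegral_sub_setIntegral_le_eLpNorm_mul_sqrt [NormedSpace ℝ E] [IsFiniteMeasure μ]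
    {f : α → E} (hf : MemLp f 2 μ) {A B : Set α} (hA : MeasurableSet A) (hB : MeasurableSet B) :
    ‖∫ x in A, f x ∂μ - ∫ x in B, f x ∂μ‖ ≤ (eLpNorm f 2 μ).toReal * √(μ (A ∆ B)).toReal := by
  have hf1 : Integrable f μ := hf.integrable one_le_two
  exact (norm_setIntegral_sub_setIntegral_le hA hB hf1.integrableOn hf1.integrableOn).trans
    (setIntegral_norm_le_eLpNorm_mul_sqrt hf (measure_ne_top μ _))

end L2Estimates

section WeakConvergence

variable {α E : Type*} [MeasurableSpace α] {μ : Measure α} [NormedAddCommGroup E]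
  [InnerProductSpace ℝ E] [CompleteSpace E] {f : ℕ → α → E} {f₀ : α → E}

theorem exists_eLpNorm_le_of_tendsto_integral_inner (hf : ∀ k, MemLp (f k) 2 μ)
    (hweak : ∀ g : α → E, MemLp g 2 μ →
      Tendsto (fun k => ∫ x, inner ℝ (f k x) (g x) ∂μ) atTop (𝓝 (∫ x, inner ℝ (f₀ x) (g x) ∂μ))) :
    ∃ C, ∀ k, (eLpNorm (f k) 2 μ).toReal ≤ C := by
  have hinner : ∀ k (g : Lp E 2 μ),
      ∫ x, inner ℝ (f k x) (g x) ∂μ = inner ℝ ((hf k).toLp (f k)) g := by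
    intro k g
    rw [L2.inner_def]
    refine integral_congr_ae ?_
    filter_upwards [(hf k).coeFn_toLp] with x hx
    rw [hx]
  obtain ⟨C, hC⟩ := exists_norm_le_of_forall_inner_tendsto (𝕜 := ℝ)
    (x := fun k => (hf k).toLp (f k))
    fun g => ⟨_, (hweak g (Lp.memLp g)).congr fun k => hinner k g⟩
  exact ⟨C, fun k => by simpa only [Lp.norm_toLp] using hC k⟩

theorem integral_inner_indicator_const {g : α → E} {S : Set α} (hS : MeasurableSet S)
    (hg : IntegrableOn g S μ) (v : E) :
    ∫ x, inner ℝ (g x) (S.indicator (fun _ => v) x) ∂μ = inner ℝ v (∫ x in S, g x ∂μ) := by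
  have hpt : ∀ x, inner ℝ (g x) (S.indicator (fun _ => v) x) = S.indicator (inner ℝ v ∘ g) x := by
    intro x
    by_cases hx : x ∈ S <;> simp [hx, real_inner_comm]
  simp_rw [hpt, integral_indicator hS, Function.comp_def]
  exact integral_inner hg v

theorem tendsto_setIntegral_of_tendsto_integral_inner [FiniteDimensional ℝ E] [IsFiniteMeasure μ]
    (hf : ∀ k, MemLp (f k) 2 μ) (hf₀ : MemLp f₀ 2 μ)
    (hweak : ∀ g : α → E, MemLp g 2 μ →
      Tendsto (fun k => ∫ x, inner ℝ (f k x) (g x) ∂μ) atTop (𝓝 (∫ x, inner ℝ (f₀ x) (g x) ∂μ)))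
    {S : Set α} (hS : MeasurableSet S) :
    Tendsto (fun k => ∫ x in S, f k x ∂μ) atTop (𝓝 (∫ x in S, f₀ x ∂μ)) := by
  refine tendsto_of_forall_inner_tendsto (𝕜 := ℝ) fun v => ?_
  have := hweak _ ((memLp_const v).indicator hS)
  simpa only [integral_inner_indicator_const hS ((hf _).integrable one_le_two).integrableOn,
    integral_inner_indicator_const hS (hf₀.integrable one_le_two).integrableOn] using this

end WeakConvergence

theorem isCompact_Q : IsCompact Q := isCompact_Icc.prod isCompact_Icc

instance : IsFiniteMeasure (volume.restrict Q) :=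
  isFiniteMeasure_restrict.mpr isCompact_Q.measure_lt_top.ne

def cornerRect (p : ℝ × ℝ) : Set (ℝ × ℝ) := Ioc 0 p.1 ×ˢ Ioc 0 p.2

theorem measurableSet_cornerRect (p : ℝ × ℝ) : MeasurableSet (cornerRect p) :=
  measurableSet_Ioc.prod measurableSet_Ioc

theorem cornerRect_subset_Q {p : ℝ × ℝ} (hp : p ∈ Q) : cornerRect p ⊆ Q :=
  prod_mono (Ioc_subset_Icc_self.trans (Icc_subset_Icc le_rfl hp.1.2))
    (Ioc_subset_Icc_self.trans (Icc_subset_Icc le_rfl hp.2.2))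

theorem cornerRect_symmDiff_subset {p q : ℝ × ℝ} (hp : p ∈ Q) (hq : q ∈ Q) :
    cornerRect p ∆ cornerRect q ⊆ Ι p.1 q.1 ×ˢ Icc 0 1 ∪ Icc 0 1 ×ˢ Ι p.2 q.2 := by
  obtain ⟨⟨-, hp1⟩, ⟨-, hp2⟩⟩ := hp
  obtain ⟨⟨-, hq1⟩, ⟨-, hq2⟩⟩ := hq
  rintro ⟨s, t⟩ hst
  simp only [cornerRect, mem_symmDiff, mem_prod, mem_Ioc, mem_union, mem_Icc, uIoc, min_def,
    max_def] at hst ⊢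
  grind

theorem volume_cornerRect_symmDiff_le {p q : ℝ × ℝ} (hp : p ∈ Q) (hq : q ∈ Q) :
    volume (cornerRect p ∆ cornerRect q) ≤ ENNReal.ofReal (2 * dist p q) := by
  have h1 : |q.1 - p.1| ≤ dist p q := by
    rw [abs_sub_comm, ← Real.dist_eq, Prod.dist_eq]; exact le_max_left _ _
  have h2 : |q.2 - p.2| ≤ dist p q := by
    rw [abs_sub_comm, ← Real.dist_eq, Prod.dist_eq]; exact le_max_right _ _
  calc volume (cornerRect p ∆ cornerRect q)
      ≤ volume (Ι p.1 q.1 ×ˢ Icc (0:ℝ) 1) + volume (Icc (0:ℝ) 1 ×ˢ Ι p.2 q.2) :=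
        (measure_mono (cornerRect_symmDiff_subset hp hq)).trans (measure_union_le _ _)
    _ = ENNReal.ofReal (|q.1 - p.1| + |q.2 - p.2|) := by
        simp only [Measure.volume_eq_prod, Measure.prod_prod, Real.volume_uIoc, Real.volume_Icc]
        rw [ENNReal.ofReal_add (abs_nonneg _) (abs_nonneg _)]
        simp
    _ ≤ ENNReal.ofReal (2 * dist p q) := ENNReal.ofReal_le_ofReal (by linarith)

theorem intervalIntegral_intervalIntegral_eq_setIntegral_cornerRect {E : Type*}
    [NormedAddCommGroup E] [NormedSpace ℝ E] {f : ℝ → ℝ → E} {p : ℝ × ℝ}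
    (hp₁ : 0 ≤ p.1) (hp₂ : 0 ≤ p.2)
    (hf : IntegrableOn (fun q : ℝ × ℝ => f q.1 q.2) (cornerRect p)) :
    ∫ s in (0:ℝ)..p.1, ∫ t in (0:ℝ)..p.2, f s t = ∫ q in cornerRect p, f q.1 q.2 := by
  rw [cornerRect, Measure.volume_eq_prod] at *
  rw [setIntegral_prod _ hf, intervalIntegral.integral_of_le hp₁]
  refine setIntegral_congr_fun measurableSet_Ioc fun s _ => ?_
  rw [intervalIntegral.integral_of_le hp₂]

theorem dist_setIntegral_cornerRect_le {E : Type*} [NormedAddCommGroup E] [NormedSpace ℝ E]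
    {f : ℝ × ℝ → E} (hf : MemLp f 2 (volume.restrict Q)) {p q : ℝ × ℝ} (hp : p ∈ Q) (hq : q ∈ Q) :
    dist (∫ x in cornerRect p, f x) (∫ x in cornerRect q, f x)
      ≤ (eLpNorm f 2 (volume.restrict Q)).toReal * √(2 * dist p q) := by
  rw [dist_eq_norm, ← Measure.restrict_restrict_of_subset (cornerRect_subset_Q hp),
    ← Measure.restrict_restrict_of_subset (μ := volume) (cornerRect_subset_Q hq)]
  refine (norm_setIntegral_sub_setIntegral_le_eLpNorm_mul_sqrt hf (measurableSet_cornerRect p)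
    (measurableSet_cornerRect q)).trans ?_
  gcongr
  calc (volume.restrict Q (cornerRect p ∆ cornerRect q)).toReal
      ≤ (ENNReal.ofReal (2 * dist p q)).toReal :=
        ENNReal.toReal_mono ENNReal.ofReal_ne_top
          (Measure.restrict_apply_le _ _ |>.trans (volume_cornerRect_symmDiff_le hp hq))
    _ = 2 * dist p q := ENNReal.toReal_ofReal (by positivity)

theorem equicontinuousOn_setIntegral_cornerRect {ι E : Type*} [NormedAddCommGroup E]
    [NormedSpace ℝ E] {f : ι → ℝ × ℝ → E} (hf : ∀ i, MemLp (f i) 2 (volume.restrict Q)) {C : ℝ}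
    (hC : ∀ i, (eLpNorm (f i) 2 (volume.restrict Q)).toReal ≤ C) :
    EquicontinuousOn (fun i p => ∫ x in cornerRect p, f i x) Q := by
  refine Metric.equicontinuousOn_of_continuity_modulus (fun t => C * √(2 * t)) ?_ _
    fun p hp q hq i => (dist_setIntegral_cornerRect_le (hf i) hp hq).trans ?_
  · have hcont : Continuous fun t : ℝ => C * √(2 * t) := by fun_prop
    simpa using hcont.tendsto 0
  · exact mul_le_mul_of_nonneg_right (hC i) (Real.sqrt_nonneg _)

/-- Lemma 3.4(a): if `zᵏ(x,y) = ∫₀ˣ∫₀ʸ lᵏ` with `lᵏ = z_{xy}ᵏ ∈ L²(Q,ℝⁿ)` and the mixed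
derivatives `lᵏ` converge weakly in `L²` to `l⁰` (weak convergence in `AC₀²`), then `zᵏ`
converges uniformly to `z⁰` on `Q`. -/
theorem weak_implies_uniform {n : ℕ}
    (l : ℕ → ℝ → ℝ → EuclideanSpace ℝ (Fin n))
    (l0 : ℝ → ℝ → EuclideanSpace ℝ (Fin n))
    (hl : ∀ k, MemLp (fun p : ℝ × ℝ => l k p.1 p.2) 2 (volume.restrict Q))
    (hl0 : MemLp (fun p : ℝ × ℝ => l0 p.1 p.2) 2 (volume.restrict Q))
    (hweak : ∀ g : ℝ → ℝ → EuclideanSpace ℝ (Fin n),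
        MemLp (fun p : ℝ × ℝ => g p.1 p.2) 2 (volume.restrict Q) →
        Filter.Tendsto
          (fun k => ∫ p in Q, inner ℝ (l k p.1 p.2) (g p.1 p.2) ∂volume)
          Filter.atTop
          (nhds (∫ p in Q, (inner ℝ (l0 p.1 p.2) (g p.1 p.2) : ℝ) ∂volume)))
    (z : ℕ → ℝ → ℝ → EuclideanSpace ℝ (Fin n))
    (z0 : ℝ → ℝ → EuclideanSpace ℝ (Fin n))
    (hz : ∀ k x y, z k x y = ∫ s in (0:ℝ)..x, ∫ t in (0:ℝ)..y, l k s t)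
    (hz0 : ∀ x y, z0 x y = ∫ s in (0:ℝ)..x, ∫ t in (0:ℝ)..y, l0 s t) :
    TendstoUniformlyOn (fun k (p : ℝ × ℝ) => z k p.1 p.2) (fun p => z0 p.1 p.2)
      Filter.atTop Q := by
  have hweak' : ∀ g : ℝ × ℝ → EuclideanSpace ℝ (Fin n), MemLp g 2 (volume.restrict Q) →
      Tendsto (fun k => ∫ p, inner ℝ (l k p.1 p.2) (g p) ∂volume.restrict Q) atTop
        (𝓝 (∫ p, inner ℝ (l0 p.1 p.2) (g p) ∂volume.restrict Q)) :=
    fun g hg => hweak (fun s t => g (s, t)) hg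
  have hrect : ∀ {f : ℝ → ℝ → EuclideanSpace ℝ (Fin n)},
      MemLp (fun q : ℝ × ℝ => f q.1 q.2) 2 (volume.restrict Q) → ∀ p ∈ Q,
      ∫ s in (0:ℝ)..p.1, ∫ t in (0:ℝ)..p.2, f s t = ∫ q in cornerRect p, f q.1 q.2 :=
    fun hf p hp => intervalIntegral_intervalIntegral_eq_setIntegral_cornerRect hp.1.1 hp.2.1
      (IntegrableOn.mono_set (hf.integrable one_le_two) (cornerRect_subset_Q hp))
  obtain ⟨C, hC⟩ := exists_eLpNorm_le_of_tendsto_integral_inner hl hweak'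
  have hpointwise : ∀ p ∈ Q, Tendsto (fun k => ∫ q in cornerRect p, l k q.1 q.2) atTop
      (𝓝 (∫ q in cornerRect p, l0 q.1 q.2)) := fun p hp => by
    simpa only [Measure.restrict_restrict_of_subset (cornerRect_subset_Q hp)] using
      tendsto_setIntegral_of_tendsto_integral_inner hl hl0 hweak' (measurableSet_cornerRect p)
  refine ((tendstoUniformlyOn_of_equicontinuousOn_of_tendsto isCompact_Q
    (equicontinuousOn_setIntegral_cornerRect hl hC) hpointwise).congr
      (Eventually.of_forall fun k p hp => ?_)).congr_right fun p hp => ?_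
  · rw [hz, hrect (hl k) p hp]
  · rw [hz0, hrect hl0 p hp]
end

section
/- Let {lᵏ} ⊂ L²(Q,ℝⁿ) converge weakly to 0 in L² and set zᵏ(x,y) = ∫₀ˣ∫₀ʸ lᵏ(s,t) ds dt. Then sup_{(x,y)∈Q} |zᵏ(x,y)| → 0 as k → ∞. -/
/-!
A weakly null sequence is bounded in `L²`, say `‖lᵏ‖₂ ≤ M` (uniform boundedness). By
Cauchy–Schwarz, `‖∫_A lᵏ - ∫_B lᵏ‖ ≤ M (√|A \ B| + √|B \ A|)`, so the primitives `zᵏ` share the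
modulus of continuity `t ↦ 2M√(2t)` on `Q` and form an equicontinuous family. Testing the weak
convergence against `1_R • v` for the rectangle `R = (0,x] × (0,y]` gives `zᵏ(x,y) → 0` pointwise,
and on the compact square equicontinuity upgrades pointwise convergence to uniform convergence.
-/

open MeasureTheory Set Real

open Filter Topology
open scoped ENNReal InnerProductSpace

section SetIntegral

variable {α E : Type*} [MeasurableSpace α] {μ : Measure α} [NormedAddCommGroup E]
  [NormedSpace ℝ E] {f : α → E}

theorem norm_setIntegral_le_eLpNorm_two_mul_sqrt (hf : MemLp f 2 μ) {s : Set α}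
    (hs : μ s ≠ ∞) : ‖∫ x in s, f x ∂μ‖ ≤ (eLpNorm f 2 μ).toReal * √(μ s).toReal := by
  have : IsFiniteMeasure (μ.restrict s) := isFiniteMeasure_restrict.2 hs
  have hfs := hf.restrict s
  have holder : eLpNorm f 1 (μ.restrict s) ≤ eLpNorm f 2 μ * μ s ^ (1 / 2 : ℝ) := by
    refine (eLpNorm_le_eLpNorm_mul_rpow_measure_univ one_le_two hfs.aestronglyMeasurable).trans ?_
    rw [Measure.restrict_apply_univ]
    norm_num
    exact mul_le_mul_left (eLpNorm_restrict_le f 2 μ s) _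
  calc ‖∫ x in s, f x ∂μ‖ ≤ ∫ x in s, ‖f x‖ ∂μ := norm_integral_le_integral_norm _
    _ = (eLpNorm f 1 (μ.restrict s)).toReal := by
      rw [integral_norm_eq_lintegral_enorm hfs.aestronglyMeasurable,
        eLpNorm_one_eq_lintegral_enorm]
    _ ≤ (eLpNorm f 2 μ * μ s ^ (1 / 2 : ℝ)).toReal :=
      ENNReal.toReal_mono (by finiteness [hf.eLpNorm_ne_top]) holder
    _ = _ := by rw [ENNReal.toReal_mul, ← ENNReal.toReal_rpow, sqrt_eq_rpow]

theorem norm_setIntegral_sub_setIntegral_le_s9 (hf : MemLp f 2 μ) {s t : Set α}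
    (hs : MeasurableSet s) (ht : MeasurableSet t) (hsμ : μ s ≠ ∞) (htμ : μ t ≠ ∞) :
    ‖∫ x in s, f x ∂μ - ∫ x in t, f x ∂μ‖ ≤
      (eLpNorm f 2 μ).toReal * (√(μ (s \ t)).toReal + √(μ (t \ s)).toReal) := by
  have hint : ∀ {u}, μ u ≠ ∞ → IntegrableOn f u μ := fun hu =>
    haveI := isFiniteMeasure_restrict.2 hu; (hf.restrict _).integrable one_le_two
  have hdiff : ∫ x in s, f x ∂μ - ∫ x in t, f x ∂μ =
      ∫ x in s \ t, f x ∂μ - ∫ x in t \ s, f x ∂μ := by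
    rw [← integral_inter_add_sdiff ht (hint hsμ), ← integral_inter_add_sdiff hs (hint htμ),
      inter_comm]
    abel
  rw [hdiff, mul_add]
  refine (norm_sub_le _ _).trans (add_le_add ?_ ?_) <;>
    exact norm_setIntegral_le_eLpNorm_two_mul_sqrt hf (measure_ne_top_of_subset sdiff_subset ‹_›)

end SetIntegral

theorem tendsto_zero_of_tendsto_inner {ι E : Type*} [NormedAddCommGroup E]
    [InnerProductSpace ℝ E] [FiniteDimensional ℝ E] {l : Filter ι} {x : ι → E}
    (h : ∀ v, Tendsto (fun k => ⟪x k, v⟫_ℝ) l (𝓝 0)) : Tendsto x l (𝓝 0) := by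
  let b := stdOrthonormalBasis ℝ E
  have := tendsto_finsetSum Finset.univ fun i _ => (h (b i)).smul_const (b i)
  simp only [zero_smul, Finset.sum_const_zero] at this
  refine this.congr fun k => ?_
  conv_rhs => rw [← b.sum_repr' (x k)]
  simp_rw [real_inner_comm]

theorem exists_norm_le_of_tendsto_inner {H : Type*} [NormedAddCommGroup H]
    [InnerProductSpace ℝ H] [CompleteSpace H] {x : ℕ → H}
    (h : ∀ v, Tendsto (fun k => ⟪x k, v⟫_ℝ) atTop (𝓝 0)) : ∃ C, ∀ k, ‖x k‖ ≤ C := by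
  obtain ⟨C, hC⟩ := banach_steinhaus (g := fun k => innerSL ℝ (x k)) fun v => by
    obtain ⟨C, hC⟩ := (h v).norm.bddAbove_range
    exact ⟨C, fun k => hC ⟨k, rfl⟩⟩
  exact ⟨C, fun k => by simpa [innerSL_apply_norm] using hC k⟩

section WeaklyNull

variable {α E : Type*} [MeasurableSpace α] [NormedAddCommGroup E] [InnerProductSpace ℝ E]

def WeaklyNullL2 (μ : Measure α) (f : ℕ → α → E) : Prop :=
  ∀ g : α → E, MemLp g 2 μ → Tendsto (fun k => ∫ p, ⟪f k p, g p⟫_ℝ ∂μ) atTop (𝓝 0)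

variable {μ : Measure α} {f : ℕ → α → E}

theorem WeaklyNullL2.exists_eLpNorm_le [CompleteSpace E] (hweak : WeaklyNullL2 μ f)
    (hf : ∀ k, MemLp (f k) 2 μ) : ∃ M, ∀ k, (eLpNorm (f k) 2 μ).toReal ≤ M := by
  have hinner : ∀ g : Lp E 2 μ, Tendsto (fun k => ⟪(hf k).toLp, g⟫_ℝ) atTop (𝓝 0) := by
    intro g
    refine (hweak g (Lp.memLp g)).congr fun k => ?_
    rw [L2.inner_def]
    refine integral_congr_ae ?_
    filter_upwards [(hf k).coeFn_toLp] with p hp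
    rw [hp]
  obtain ⟨M, hM⟩ := exists_norm_le_of_tendsto_inner hinner
  exact ⟨M, fun k => by simpa [Lp.norm_toLp] using hM k⟩

theorem WeaklyNullL2.tendsto_setIntegral [FiniteDimensional ℝ E] (hweak : WeaklyNullL2 μ f)
    {s : Set α} (hf : ∀ k, IntegrableOn (f k) s μ) (hs : MeasurableSet s) (hsμ : μ s ≠ ∞) :
    Tendsto (fun k => ∫ p in s, f k p ∂μ) atTop (𝓝 0) := by
  refine tendsto_zero_of_tendsto_inner fun v => ?_
  refine (hweak _ (memLp_indicator_const 2 hs v (Or.inr hsμ))).congr fun k => ?_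
  have hind : ∀ p, ⟪f k p, s.indicator (fun _ => v) p⟫_ℝ =
      s.indicator (fun p => ⟪f k p, v⟫_ℝ) p :=
    fun p => by by_cases hp : p ∈ s <;> simp [hp]
  simp_rw [hind, integral_indicator hs]
  simpa only [real_inner_comm v] using integral_inner (hf k) v

end WeaklyNull

theorem tendsto_iSup_iSup_norm_of_equicontinuous {ι X Y E : Type*} [TopologicalSpace X]
    [CompactSpace X] [Nonempty X] [TopologicalSpace Y] [CompactSpace Y] [Nonempty Y]
    [NormedAddCommGroup E] {l : Filter ι} {F : ι → X → Y → E}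
    (hF : Equicontinuous fun k (p : X × Y) => F k p.1 p.2)
    (h : ∀ x y, Tendsto (fun k => F k x y) l (𝓝 0)) :
    Tendsto (fun k => ⨆ x, ⨆ y, ‖F k x y‖) l (𝓝 0) := by
  have hunif : TendstoUniformly (fun k (p : X × Y) => F k p.1 p.2) 0 l :=
    UniformFun.tendsto_iff_tendstoUniformly.1 <|
      (hF.tendsto_uniformFun_iff_pi l 0).2 (tendsto_pi_nhds.2 fun p => h p.1 p.2)
  rw [Metric.tendsto_nhds]
  intro ε hε
  filter_upwards [Metric.tendstoUniformly_iff.1 hunif (ε / 2) (half_pos hε)] with k hk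
  have hle : ⨆ x, ⨆ y, ‖F k x y‖ ≤ ε / 2 :=
    ciSup_le fun x => ciSup_le fun y => by simpa using (hk (x, y)).le
  have hnonneg : 0 ≤ ⨆ x, ⨆ y, ‖F k x y‖ :=
    Real.iSup_nonneg fun x => Real.iSup_nonneg fun y => norm_nonneg _
  rw [Real.dist_eq, sub_zero, abs_of_nonneg hnonneg]
  linarith

theorem intervalIntegral_intervalIntegral_eq_setIntegral_prod {E : Type*}
    [NormedAddCommGroup E] [NormedSpace ℝ E] {f : ℝ → ℝ → E} {a b c d : ℝ} (hab : a ≤ b)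
    (hcd : c ≤ d) (hf : IntegrableOn (fun p : ℝ × ℝ => f p.1 p.2) (Ioc a b ×ˢ Ioc c d)) :
    ∫ s in a..b, ∫ t in c..d, f s t = ∫ p in Ioc a b ×ˢ Ioc c d, f p.1 p.2 := by
  simp only [intervalIntegral.integral_of_le hab, intervalIntegral.integral_of_le hcd]
  exact (setIntegral_prod (fun p : ℝ × ℝ => f p.1 p.2) hf).symm

theorem Ioc_sdiff_Ioc_subset_Ioc {a b c : ℝ} : Ioc a b \ Ioc a c ⊆ Ioc c b :=
  fun _ ⟨⟨hat, htb⟩, ht⟩ => ⟨not_le.1 fun htc => ht ⟨hat, htc⟩, htb⟩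

theorem volume_Ioc_prod_Ioc_sdiff_le {x y x' y' : ℝ} (hx : x ≤ 1) (hy : y ≤ 1) :
    volume (Ioc 0 x ×ˢ Ioc 0 y \ Ioc 0 x' ×ˢ Ioc 0 y') ≤
      ENNReal.ofReal (|x - x'| + |y - y'|) := by
  have hsub : Ioc 0 x ×ˢ Ioc 0 y \ Ioc 0 x' ×ˢ Ioc 0 y' ⊆
      Ioc 0 1 ×ˢ Ioc y' y ∪ Ioc x' x ×ˢ Ioc 0 1 := by
    rw [prod_sdiff_prod]
    exact union_subset_union (prod_mono (Ioc_subset_Ioc_right hx) Ioc_sdiff_Ioc_subset_Ioc)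
      (prod_mono Ioc_sdiff_Ioc_subset_Ioc (Ioc_subset_Ioc_right hy))
  calc _ ≤ volume (Ioc 0 1 ×ˢ Ioc y' y ∪ Ioc x' x ×ˢ Ioc 0 1) := measure_mono hsub
    _ ≤ ENNReal.ofReal (y - y') + ENNReal.ofReal (x - x') := by
      refine (measure_union_le _ _).trans ?_
      simp [Measure.volume_eq_prod, Measure.prod_prod, Real.volume_Ioc]
    _ ≤ _ := by
      rw [add_comm, ENNReal.ofReal_add (abs_nonneg _) (abs_nonneg _)]
      gcongr <;> exact le_abs_self _

theorem Ioc_prod_Ioc_subset_Q {x y : ℝ} (hx : x ≤ 1) (hy : y ≤ 1) :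
    Ioc 0 x ×ˢ Ioc 0 y ⊆ Q :=
  prod_mono (Ioc_subset_Icc_self.trans (Icc_subset_Icc_right hx))
    (Ioc_subset_Icc_self.trans (Icc_subset_Icc_right hy))

instance inst_s9 : IsFiniteMeasure (volume.restrict Q) :=
  isFiniteMeasure_restrict.2 (isCompact_Icc.prod isCompact_Icc).measure_lt_top.ne

theorem norm_setIntegral_Ioc_prod_Ioc_sub_le {E : Type*} [NormedAddCommGroup E]
    [NormedSpace ℝ E] {f : ℝ × ℝ → E} (hf : MemLp f 2 (volume.restrict Q)) {x y x' y' : ℝ}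
    (hx : x ≤ 1) (hy : y ≤ 1) (hx' : x' ≤ 1) (hy' : y' ≤ 1) :
    ‖(∫ p in Ioc 0 x ×ˢ Ioc 0 y, f p) - ∫ p in Ioc 0 x' ×ˢ Ioc 0 y', f p‖ ≤
      2 * (eLpNorm f 2 (volume.restrict Q)).toReal * √(|x - x'| + |y - y'|) := by
  have hmeas : ∀ a b : ℝ, MeasurableSet (Ioc 0 a ×ˢ Ioc 0 b) := fun _ _ =>
    measurableSet_Ioc.prod measurableSet_Ioc
  have hvol : ∀ {a b a' b' : ℝ}, a ≤ 1 → b ≤ 1 →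
      (volume.restrict Q (Ioc 0 a ×ˢ Ioc 0 b \ Ioc 0 a' ×ˢ Ioc 0 b')).toReal ≤
        |a - a'| + |b - b'| := fun ha hb =>
    ENNReal.toReal_le_of_le_ofReal (by positivity) <|
      (Measure.restrict_le_self _).trans (volume_Ioc_prod_Ioc_sdiff_le ha hb)
  rw [← Measure.restrict_restrict_of_subset (Ioc_prod_Ioc_subset_Q hx hy),
    ← Measure.restrict_restrict_of_subset (Ioc_prod_Ioc_subset_Q hx' hy')]
  refine (norm_setIntegral_sub_setIntegral_le_s9 hf (hmeas x y) (hmeas x' y') (measure_ne_top _ _)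
    (measure_ne_top _ _)).trans ?_
  rw [two_mul, add_mul, ← mul_add]
  gcongr
  · exact hvol hx hy
  · rw [abs_sub_comm x, abs_sub_comm y]
    exact hvol hx' hy'

theorem equicontinuous_setIntegral_Ioc_prod_Ioc {ι E : Type*} [NormedAddCommGroup E]
    [NormedSpace ℝ E] {f : ι → ℝ × ℝ → E} {M : ℝ}
    (hf : ∀ k, MemLp (f k) 2 (volume.restrict Q))
    (hM : ∀ k, (eLpNorm (f k) 2 (volume.restrict Q)).toReal ≤ M) :
    Equicontinuous fun k (p : Icc (0:ℝ) 1 × Icc (0:ℝ) 1) =>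
      ∫ q in Ioc 0 (p.1 : ℝ) ×ˢ Ioc 0 (p.2 : ℝ), f k q := by
  refine Metric.equicontinuous_of_continuity_modulus (fun t => 2 * M * √(2 * t)) ?_ _ ?_
  · simpa using ((continuous_sqrt.comp (continuous_const_mul 2)).const_mul (2 * M)).tendsto 0
  rintro ⟨⟨x, hx⟩, ⟨y, hy⟩⟩ ⟨⟨x', hx'⟩, ⟨y', hy'⟩⟩ k
  have hdist : |x - x'| + |y - y'| ≤
      2 * dist (⟨⟨x, hx⟩, ⟨y, hy⟩⟩ : Icc (0:ℝ) 1 × Icc (0:ℝ) 1) ⟨⟨x', hx'⟩, ⟨y', hy'⟩⟩ := by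
    simp only [Prod.dist_eq, Subtype.dist_eq, Real.dist_eq]
    linarith [le_max_left |x - x'| |y - y'|, le_max_right |x - x'| |y - y'|]
  rw [dist_eq_norm]
  refine (norm_setIntegral_Ioc_prod_Ioc_sub_le (hf k) hx.2 hy.2 hx'.2 hy'.2).trans ?_
  have hM0 : 0 ≤ M := ENNReal.toReal_nonneg.trans (hM k)
  gcongr
  exact hM k

/-- If `lᵏ ⇀ 0` weakly in `L²(Q,ℝⁿ)` and `zᵏ(x,y) = ∫₀ˣ∫₀ʸ lᵏ`, then
`sup_{(x,y)∈Q} |zᵏ(x,y)| → 0` as `k → ∞`. -/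
theorem weakly_null_implies_sup_tendsto_zero {n : ℕ}
    (l : ℕ → ℝ → ℝ → EuclideanSpace ℝ (Fin n))
    (hl : ∀ k, MemLp (fun p : ℝ × ℝ => l k p.1 p.2) 2 (volume.restrict Q))
    (hweak : ∀ g : ℝ → ℝ → EuclideanSpace ℝ (Fin n),
        MemLp (fun p : ℝ × ℝ => g p.1 p.2) 2 (volume.restrict Q) →
        Filter.Tendsto
          (fun k => ∫ p in Q, inner ℝ (l k p.1 p.2) (g p.1 p.2) ∂volume)
          Filter.atTop (nhds (0:ℝ)))
    (z : ℕ → ℝ → ℝ → EuclideanSpace ℝ (Fin n))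
    (hz : ∀ k x y, z k x y = ∫ s in (0:ℝ)..x, ∫ t in (0:ℝ)..y, l k s t) :
    Filter.Tendsto
      (fun k => ⨆ x : Icc (0:ℝ) 1, ⨆ y : Icc (0:ℝ) 1, ‖z k x y‖)
      Filter.atTop (nhds 0) := by
  have hweakL2 : WeaklyNullL2 (volume.restrict Q) fun k (p : ℝ × ℝ) => l k p.1 p.2 :=
    fun g hg => hweak (fun a b => g (a, b)) hg
  obtain ⟨M, hM⟩ := hweakL2.exists_eLpNorm_le hl
  have hRQ : ∀ x y : Icc (0:ℝ) 1, Ioc 0 (x : ℝ) ×ˢ Ioc 0 (y : ℝ) ⊆ Q := fun x y =>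
    Ioc_prod_Ioc_subset_Q x.2.2 y.2.2
  have hint : ∀ k (x y : Icc (0:ℝ) 1),
      IntegrableOn (fun p : ℝ × ℝ => l k p.1 p.2) (Ioc 0 (x : ℝ) ×ˢ Ioc 0 (y : ℝ)) :=
    fun k x y => IntegrableOn.mono_set ((hl k).integrable one_le_two) (hRQ x y)
  have hrect : ∀ k (x y : Icc (0:ℝ) 1),
      z k x y = ∫ p in Ioc 0 (x : ℝ) ×ˢ Ioc 0 (y : ℝ), l k p.1 p.2 := fun k x y => by
    rw [hz]
    exact intervalIntegral_intervalIntegral_eq_setIntegral_prod x.2.1 y.2.1 (hint k x y)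
  refine tendsto_iSup_iSup_norm_of_equicontinuous (F := fun k (x y : Icc (0:ℝ) 1) => z k x y)
    ?_ fun x y => ?_
  · simpa only [hrect] using equicontinuous_setIntegral_Ioc_prod_Ioc hl hM
  · simp only [hrect]
    simpa only [Measure.restrict_restrict_of_subset (hRQ x y)] using
      hweakL2.tendsto_setIntegral (fun k => (hint k x y).restrict)
        (measurableSet_Ioc.prod measurableSet_Ioc) (measure_ne_top _ _)
end
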